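/- arXiv:1310.2424 — 2 statements merged into one kernel-verified Lean document; each statement's English description precedes it below -/
import Mathlib

section
/- For any finite connected multigraph G with vertex set V and any non-trivial partition Π of V, the partition weights satisfy ∑_{T spanning tree of G} w^Π(G,T) = 1, where w^Π(G,T) = ∑_{τ admissible ordering of T} ∏_{p=0}^{|V|−2} 1/k_p(T_τ), and k_p(T_τ) is the number of trans-block edges of the p-th contracted graph for the p-th contracted partition in the sequence generated by T_τ. -/
open scoped Classical
open MeasureTheory

/-- A multigraph on vertex type `V` with edge type `E`: each edge has an
unordered pair of endpoints (self-loops and multiple edges allowed). -/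
structure Multigraph (V E : Type) where
  ends : E → Sym2 V

namespace Multigraph

variable {V E : Type}

/-- Two vertices are connected using only edges in the subset `S`. -/
def Connects (G : Multigraph V E) (S : Finset E) (v w : V) : Prop :=
  Relation.ReflTransGen (fun a b => ∃ e ∈ S, G.ends e = s(a, b)) v w

/-- The multigraph is connected. -/
def IsConnected (G : Multigraph V E) [Fintype E] : Prop :=
  ∀ v w : V, G.Connects Finset.univ v w

/-- A spanning tree: a spanning connected edge subset with `|V| - 1` edges. -/
def IsSpanningTree (G : Multigraph V E) [Fintype V] [Fintype E] (T : Finset E) : Prop :=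
  (∀ v w : V, G.Connects T v w) ∧ T.card = Fintype.card V - 1

/-- Kruskal's greedy algorithm: process the edges in increasing order of the
Hepp sector `σ`, inserting an edge iff it does not create a cycle (i.e. iff
its endpoints are not yet connected by the edges selected so far). -/
noncomputable def kruskal (G : Multigraph V E) [Fintype E]
    (σ : E ≃ Fin (Fintype.card E)) : Finset E :=
  ((List.finRange (Fintype.card E)).map σ.symm).foldl
    (fun S e => if ∀ a b, G.ends e = s(a, b) → ¬ G.Connects S a b then insert e S else S) ∅

/-- The symmetric weight `w_s(G,T)`: the fraction of Hepp sectors for which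
`T` is the Kruskal leading tree. -/
noncomputable def ws (G : Multigraph V E) [Fintype V] [Fintype E] (T : Finset E) : ℚ :=
  (Fintype.card {σ : E ≃ Fin (Fintype.card E) // G.kruskal σ = T} : ℚ) /
    (Nat.factorial (Fintype.card E) : ℚ)

/-- Updating the merge relation (which vertices have been identified) after
contracting the edge `e`: the equivalence closure of `M` together with the
pair of endpoints of `e`. -/
def mergeStep (G : Multigraph V E) (M : V → V → Prop) (e : E) : V → V → Prop :=
  Relation.EqvGen (fun a b => M a b ∨ G.ends e = s(a, b))

/-- Updating the block (partition) relation after contracting the trans-block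
edge `e`: the new merged vertex forms a singleton block, the endpoints of `e`
are removed from their old blocks, and all other blocks are unchanged. -/
def blockStep (G : Multigraph V E) (M B : V → V → Prop) (e : E) : V → V → Prop :=
  fun x y => ∀ a b, G.ends e = s(a, b) →
    ((G.mergeStep M e x a ∧ G.mergeStep M e y a) ∨
      (B x y ∧ ¬ G.mergeStep M e x a ∧ ¬ G.mergeStep M e y a))

/-- One contraction step on the pair (merge relation, block relation). -/
def stepPair (G : Multigraph V E) (s : (V → V → Prop) × (V → V → Prop)) (e : E) :
    (V → V → Prop) × (V → V → Prop) :=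
  (G.mergeStep s.1 e, G.blockStep s.1 s.2 e)

/-- The state (merge relation, block relation) after contracting, in order,
the edges of the list `L`, starting from the discrete merge relation `Eq` and
initial block (partition) relation `B0`. -/
def state (G : Multigraph V E) (B0 : V → V → Prop) (L : List E) :
    (V → V → Prop) × (V → V → Prop) :=
  L.foldl G.stepPair (Eq, B0)

/-- An edge is trans-block for the block relation `B` if its endpoints lie in
distinct blocks (in particular it is not a self-loop, even after merging). -/
def TransBlock (G : Multigraph V E) (B : V → V → Prop) (e : E) : Prop :=
  ∀ a b, G.ends e = s(a, b) → ¬ B a b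

/-- The ordered list of edges `L` is a trans-block ordered forest for the
initial partition `B0`: each successive edge is trans-block for the
successively contracted partition. -/
def IsTransBlockSeq (G : Multigraph V E) (B0 : V → V → Prop) (L : List E) : Prop :=
  ∀ p (h : p < L.length), G.TransBlock (G.state B0 (L.take p)).2 (L.get ⟨p, h⟩)

/-- `k_p`: the number of trans-block edges of the `p`-th contracted graph for
the `p`-th contracted partition (already-contracted edges are self-loops of
the contracted graph, hence never trans-block). -/
noncomputable def kcount (G : Multigraph V E) [Fintype E] (B0 : V → V → Prop)
    (L : List E) (p : ℕ) : ℕ :=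
  (Finset.univ.filter fun e => G.TransBlock (G.state B0 (L.take p)).2 e).card

/-- First contact index `i(v,v')`: smallest `p` such that `v, v'` lie in
different blocks of `Π_p` (with the convention `i(v,v) = -1, j(v,v) = 0`,
realized here by taking `i(v,v) = j(v,v) = 0`, which makes the corresponding
products empty, as in the convention `X_{v,v} = 1`). -/
noncomputable def iIdx (G : Multigraph V E) (B0 : V → V → Prop) (L : List E)
    (v v' : V) : ℕ :=
  if v = v' then 0 else sInf {p | ¬ (G.state B0 (L.take p)).2 v v'}

/-- Second contact index `j(v,v')`: smallest `p` such that `v, v'` have been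
merged into a single vertex of `G_p`. -/
noncomputable def jIdx (G : Multigraph V E) (B0 : V → V → Prop) (L : List E)
    (v v' : V) : ℕ :=
  sInf {p | (G.state B0 (L.take p)).1 v v'}

/-- Entry of the contact matrix: `X_{v,v'}(u) = ∏_{i(v,v') < k ≤ j(v,v')} u_k`,
where the variable `u_k` (1 ≤ k ≤ |V|-1) is represented by `w ⟨k-1⟩`. -/
noncomputable def Xent (G : Multigraph V E) (B0 : V → V → Prop) (L : List E)
    (n : ℕ) (w : Fin n → ℝ) (v v' : V) : ℝ :=
  ∏ k : Fin n,
    if G.iIdx B0 L v v' ≤ (k : ℕ) ∧ (k : ℕ) < G.jIdx B0 L v v' then w k else 1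

/-- Contact-matrix factor `X_{v(ℓ),v'(ℓ)}(u)` of a (loop) edge `ℓ`. -/
noncomputable def XentE (G : Multigraph V E) (B0 : V → V → Prop) (L : List E)
    (n : ℕ) (w : Fin n → ℝ) (e : E) : ℝ :=
  ∏ k : Fin n,
    if (∀ a b, G.ends e = s(a, b) →
        (G.iIdx B0 L a b ≤ (k : ℕ) ∧ (k : ℕ) < G.jIdx B0 L a b)) then w k else 1

/-- Tree edge factor `Y_ℓ(u) = ∏_{i(v(ℓ),v'(ℓ)) < k < j(v(ℓ),v'(ℓ))} u_k`. -/
noncomputable def Yent (G : Multigraph V E) (B0 : V → V → Prop) (L : List E)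
    (n : ℕ) (w : Fin n → ℝ) (e : E) : ℝ :=
  ∏ k : Fin n,
    if (∀ a b, G.ends e = s(a, b) →
        (G.iIdx B0 L a b ≤ (k : ℕ) ∧ (k : ℕ) + 1 < G.jIdx B0 L a b)) then w k else 1

/-- The weight `∏_{p=0}^{|V|-2} 1/k_p` of a trans-block ordered tree, and `0`
for a non-admissible ordering. -/
noncomputable def wOrd (G : Multigraph V E) [Fintype V] [Fintype E]
    (B0 : V → V → Prop) (L : List E) : ℚ :=
  if G.IsTransBlockSeq B0 L then
    ∏ p ∈ Finset.range (Fintype.card V - 1), ((G.kcount B0 L p : ℚ))⁻¹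
  else 0

/-- The partition tree weight `w^Π(G,T)`: the sum over all admissible
orderings `τ` of `T` of `∏_{p=0}^{|V|-2} 1/k_p(T_τ)`. -/
noncomputable def wPi (G : Multigraph V E) [Fintype V] [Fintype E]
    (B0 : V → V → Prop) (T : Finset E) : ℚ :=
  ∑ τ : Fin T.card ≃ {e // e ∈ T}, G.wOrd B0 (List.ofFn fun i => ((τ i : E)))

end Multigraph

/-!
Read the product `∏ₚ 1/kₚ` as the probability of a random contraction process: at each step one of
the `kₚ` trans-block edges of the current contracted graph is chosen uniformly and contracted. The
merged vertex forms a block of its own, so while two vertices remain the partition is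
non-trivial, and by connectivity some edge is trans-block: the process never gets stuck before its
`|V| - 1` steps, and the probabilities of all edge sequences add up to `1`. A sequence of positive
probability never repeats an edge (a contracted edge becomes a self-loop) and merges two vertices
at every step, so it is an admissible ordering of exactly one spanning tree, namely its set of
edges.
-/

open Finset in
lemma sum_equiv_fin_eq_sum_ofFn {E R : Type} [Fintype E] [AddCommMonoid R] (T : Finset E)
    (Φ : List E → R) :
    ∑ τ : Fin T.card ≃ T, Φ (List.ofFn fun i => (τ i : E)) =
      ∑ f : Fin T.card → E,
        if (List.ofFn f).Nodup ∧ (List.ofFn f).toFinset ⊆ T then Φ (List.ofFn f) else 0 := by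
  have hiff : ∀ f : Fin T.card → E,
      (List.ofFn f).Nodup ∧ (List.ofFn f).toFinset ⊆ T ↔ Function.Injective f ∧ ∀ i, f i ∈ T :=
    fun f => and_congr List.nodup_ofFn (by simp [subset_iff])
  rw [← sum_filter]
  refine sum_bij' (fun τ _ i => (τ i : E))
    (fun f hf =>
      have hf := (hiff f).1 (mem_filter.1 hf).2
      Equiv.ofBijective (fun i => ⟨f i, hf.2 i⟩)
        ((Fintype.bijective_iff_injective_and_card _).2
          ⟨fun i j hij => hf.1 (congrArg Subtype.val hij), by simp⟩))
    (fun τ _ => ?_) (fun _ _ => mem_univ _) (fun _ _ => Equiv.ext fun _ => rfl)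
    (fun _ _ => rfl) (fun _ _ => rfl)
  rw [mem_filter, hiff]
  exact ⟨mem_univ _, Subtype.val_injective.comp τ.injective, fun i => (τ i).2⟩

namespace Multigraph

open Finset

variable {V E : Type} (G : Multigraph V E)

def joinClasses (M : V → V → Prop) (a b : V) : V → V → Prop :=
  fun x y => M x y ∨ ((M x a ∨ M x b) ∧ (M y a ∨ M y b))

lemma equivalence_joinClasses {M : V → V → Prop} (hM : Equivalence M) (a b : V) :
    Equivalence (joinClasses M a b) where
  refl x := Or.inl (hM.refl x)
  symm := by
    rintro x y (h | ⟨hx, hy⟩)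
    exacts [Or.inl (hM.symm h), Or.inr ⟨hy, hx⟩]
  trans := by
    rintro x y z (h | ⟨hx, hy⟩) (h' | ⟨hy', hz⟩)
    · exact Or.inl (hM.trans h h')
    · exact Or.inr ⟨hy'.imp (hM.trans h) (hM.trans h), hz⟩
    · exact Or.inr ⟨hx, hy.imp (hM.trans (hM.symm h')) (hM.trans (hM.symm h'))⟩
    · exact Or.inr ⟨hx, hz⟩

lemma joinClasses_left_iff {M : V → V → Prop} (hM : Equivalence M) {a b z : V} :
    joinClasses M a b z a ↔ M z a ∨ M z b :=
  ⟨fun h => h.elim Or.inl And.left, fun h => Or.inr ⟨h, Or.inl (hM.refl a)⟩⟩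

lemma joinClasses_right_iff {M : V → V → Prop} (hM : Equivalence M) {a b z : V} :
    joinClasses M a b z b ↔ M z a ∨ M z b :=
  ⟨fun h => h.elim Or.inr And.left, fun h => Or.inr ⟨h, Or.inr (hM.refl b)⟩⟩

def isolate (B : V → V → Prop) (S : V → Prop) : V → V → Prop :=
  fun x y => (S x ∧ S y) ∨ (B x y ∧ ¬ S x ∧ ¬ S y)

lemma equivalence_isolate {B : V → V → Prop} (hB : Equivalence B) (S : V → Prop) :
    Equivalence (isolate B S) where
  refl x := (em (S x)).elim (fun h => Or.inl ⟨h, h⟩) fun h => Or.inr ⟨hB.refl x, h, h⟩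
  symm := by
    rintro x y (⟨hx, hy⟩ | ⟨h, hx, hy⟩)
    exacts [Or.inl ⟨hy, hx⟩, Or.inr ⟨hB.symm h, hy, hx⟩]
  trans := by
    rintro x y z (⟨hx, hy⟩ | ⟨h, hx, hy⟩) (⟨hy', hz⟩ | ⟨h', hy', hz⟩)
    · exact Or.inl ⟨hx, hz⟩
    · exact absurd hy hy'
    · exact absurd hy' hy
    · exact Or.inr ⟨hB.trans h h', hx, hz⟩

lemma joinClasses_le_isolate {M B : V → V → Prop} (hM : Equivalence M)
    (hMB : ∀ x y, M x y → B x y) {a b x y : V} (h : joinClasses M a b x y) :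
    isolate B (fun z => M z a ∨ M z b) x y := by
  rcases h with hxy | ⟨hx, hy⟩
  · by_cases hx : M x a ∨ M x b
    · exact Or.inl ⟨hx, hx.imp (hM.trans (hM.symm hxy)) (hM.trans (hM.symm hxy))⟩
    · exact Or.inr ⟨hMB x y hxy, hx, fun hy => hx (hy.imp (hM.trans hxy) (hM.trans hxy))⟩
  · exact Or.inl ⟨hx, hy⟩

lemma mergeStep_eq_joinClasses {M : V → V → Prop} (hM : Equivalence M) {e : E} {a b : V}
    (he : G.ends e = s(a, b)) : G.mergeStep M e = joinClasses M a b := by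
  have hgen : ∀ x y, M x y ∨ G.ends e = s(x, y) → joinClasses M a b x y := by
    rintro x y (h | h)
    · exact Or.inl h
    · rcases Sym2.eq_iff.1 (h.symm.trans he) with ⟨rfl, rfl⟩ | ⟨rfl, rfl⟩
      · exact Or.inr ⟨Or.inl (hM.refl x), Or.inr (hM.refl y)⟩
      · exact Or.inr ⟨Or.inr (hM.refl x), Or.inl (hM.refl y)⟩
  have hmerge := Relation.EqvGen.is_equivalence (fun x y => M x y ∨ G.ends e = s(x, y))
  have hto : ∀ z, M z a ∨ M z b → G.mergeStep M e z a := by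
    rintro z (h | h)
    · exact Relation.EqvGen.rel _ _ (Or.inl h)
    · exact hmerge.trans (Relation.EqvGen.rel _ _ (Or.inl h))
        (Relation.EqvGen.rel _ _ (Or.inr (he.trans Sym2.eq_swap)))
  funext x y
  refine propext ⟨fun h => ?_, ?_⟩
  · rw [← (equivalence_joinClasses hM a b).eqvGen_eq]
    exact Relation.EqvGen.mono hgen x y h
  · rintro (h | ⟨hx, hy⟩)
    · exact Relation.EqvGen.rel _ _ (Or.inl h)
    · exact hmerge.trans (hto x hx) (hmerge.symm (hto y hy))

lemma blockStep_eq_isolate {M : V → V → Prop} (hM : Equivalence M) (B : V → V → Prop)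
    {e : E} {a b : V} (he : G.ends e = s(a, b)) :
    G.blockStep M B e = isolate B (fun z => M z a ∨ M z b) := by
  funext x y
  refine propext ⟨fun h => ?_, fun h a' b' he' => ?_⟩
  · simpa only [mergeStep_eq_joinClasses G hM he, joinClasses_left_iff hM, isolate]
      using h a b he
  · rw [mergeStep_eq_joinClasses G hM he]
    rcases Sym2.eq_iff.1 (he'.symm.trans he) with ⟨rfl, rfl⟩ | ⟨rfl, rfl⟩
    · simpa only [joinClasses_left_iff hM, isolate] using h
    · simpa only [joinClasses_right_iff hM, isolate] using h

lemma transBlock_iff {B : V → V → Prop} (hB : Equivalence B) {e : E} {a b : V}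
    (he : G.ends e = s(a, b)) : G.TransBlock B e ↔ ¬ B a b := by
  refine ⟨fun h => h a b he, fun h a' b' he' hB' => h ?_⟩
  rcases Sym2.eq_iff.1 (he'.symm.trans he) with ⟨rfl, rfl⟩ | ⟨rfl, rfl⟩
  exacts [hB', hB.symm hB']

lemma exists_transBlock [Fintype E] (hG : G.IsConnected) {B : V → V → Prop}
    (hB : Equivalence B) (hnt : ∃ v w, ¬ B v w) : ∃ e, G.TransBlock B e := by
  obtain ⟨v, w, hvw⟩ := hnt
  by_contra! hnone
  have hconn : ∀ x y, G.Connects univ x y → B x y := fun x y hxy => by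
    induction hxy with
    | refl => exact hB.refl x
    | tail _ hstep ih =>
      obtain ⟨e, -, he⟩ := hstep
      exact hB.trans ih (not_not.1 ((G.transBlock_iff hB he).not.1 (hnone e)))
  exact hvw (hconn v w (hG v w))

lemma exists_ends_eq (e : E) : ∃ a b, G.ends e = s(a, b) :=
  Sym2.ind (f := fun z => ∃ a b, z = s(a, b)) (fun a b => ⟨a, b, rfl⟩) (G.ends e)

lemma connects_symm {S : Finset E} {v w : V} (h : G.Connects S v w) : G.Connects S w v := by
  induction h with
  | refl => exact Relation.ReflTransGen.refl
  | tail _ hstep ih =>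
    obtain ⟨e, he, hends⟩ := hstep
    exact Relation.ReflTransGen.head ⟨e, he, hends.trans Sym2.eq_swap⟩ ih

lemma connects_equivalence (S : Finset E) : Equivalence (G.Connects S) :=
  ⟨fun _ => Relation.ReflTransGen.refl, G.connects_symm, Relation.ReflTransGen.trans⟩

def stateFrom (s : (V → V → Prop) × (V → V → Prop)) (L : List E) :
    (V → V → Prop) × (V → V → Prop) :=
  L.foldl G.stepPair s

def IsTransBlockSeqFrom (s : (V → V → Prop) × (V → V → Prop)) (L : List E) : Prop :=
  ∀ p (h : p < L.length), G.TransBlock (G.stateFrom s (L.take p)).2 (L.get ⟨p, h⟩)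

lemma isTransBlockSeqFrom_cons (s : (V → V → Prop) × (V → V → Prop)) (e : E) (L : List E) :
    G.IsTransBlockSeqFrom s (e :: L) ↔
      G.TransBlock s.2 e ∧ G.IsTransBlockSeqFrom (G.stepPair s e) L := by
  refine ⟨fun h => ⟨h 0 (Nat.succ_pos _), fun p hp => h (p + 1) (by simpa using hp)⟩, ?_⟩
  rintro ⟨he, hL⟩ (_ | p) hp
  exacts [he, hL p (by simpa using hp)]

lemma connects_of_stateFrom {S : Finset E} {s : (V → V → Prop) × (V → V → Prop)} {L : List E}
    (hs : ∀ x y, s.1 x y → G.Connects S x y) (hL : ∀ e ∈ L, e ∈ S) :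
    ∀ x y, (G.stateFrom s L).1 x y → G.Connects S x y := by
  induction L generalizing s with
  | nil => exact hs
  | cons e L ih =>
    refine ih (fun x y hxy => ?_) fun e' he' => hL e' (List.mem_cons_of_mem e he')
    rw [← (G.connects_equivalence S).eqvGen_eq]
    refine Relation.EqvGen.mono (fun x y => ?_) x y hxy
    rintro (h | h)
    exacts [hs x y h, Relation.ReflTransGen.single ⟨e, hL e List.mem_cons_self, h⟩]

section Weights

variable [Fintype E]

noncomputable def numTransBlock (B : V → V → Prop) : ℕ := #(univ.filter (G.TransBlock B))

noncomputable def weightFrom (s : (V → V → Prop) × (V → V → Prop)) (L : List E) : ℚ :=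
  if G.IsTransBlockSeqFrom s L then
    ∏ p ∈ range L.length, ((G.numTransBlock (G.stateFrom s (L.take p)).2 : ℚ))⁻¹
  else 0

lemma weightFrom_nil (s : (V → V → Prop) × (V → V → Prop)) : G.weightFrom s [] = 1 := by
  simp [weightFrom, IsTransBlockSeqFrom]

lemma weightFrom_cons (s : (V → V → Prop) × (V → V → Prop)) (e : E) (L : List E) :
    G.weightFrom s (e :: L) =
      if G.TransBlock s.2 e then
        (G.numTransBlock s.2 : ℚ)⁻¹ * G.weightFrom (G.stepPair s e) L
      else 0 := by
  simp only [weightFrom, isTransBlockSeqFrom_cons]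
  by_cases he : G.TransBlock s.2 e
  · by_cases hL : G.IsTransBlockSeqFrom (G.stepPair s e) L
    · simp only [he, hL, and_self, if_true, List.length_cons, prod_range_succ', List.take_succ_cons,
        List.take_zero]
      exact mul_comm _ _
    · simp [hL]
  · simp [he]

end Weights

variable [Fintype V]

noncomputable def classOf (M : V → V → Prop) (v : V) : Finset V := univ.filter (M v)

noncomputable def numClasses (M : V → V → Prop) : ℕ := (univ.image (classOf M)).card

lemma mem_classOf {M : V → V → Prop} {v u : V} : u ∈ classOf M v ↔ M v u := by
  simp [classOf]

lemma classOf_eq_classOf_iff {M : V → V → Prop} (hM : Equivalence M) {v w : V} :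
    classOf M v = classOf M w ↔ M v w := by
  refine ⟨fun h => mem_classOf.1 (h ▸ mem_classOf.2 (hM.refl w)), fun h => ?_⟩
  ext u
  simp only [mem_classOf]
  exact ⟨hM.trans (hM.symm h), hM.trans h⟩

lemma classOf_mem_image (M : V → V → Prop) (v : V) : classOf M v ∈ univ.image (classOf M) :=
  mem_image_of_mem _ (mem_univ v)

lemma numClasses_eq_card : numClasses (Eq : V → V → Prop) = Fintype.card V := by
  have hinj : Function.Injective (classOf (Eq : V → V → Prop)) := fun v w h =>
    (classOf_eq_classOf_iff eq_equivalence).1 h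
  rw [numClasses, card_image_of_injective _ hinj, card_univ]

lemma numClasses_eq_one_iff [Nonempty V] {M : V → V → Prop} (hM : Equivalence M) :
    numClasses M = 1 ↔ ∀ x y, M x y := by
  obtain ⟨a⟩ := ‹Nonempty V›
  rw [numClasses, card_eq_one]
  constructor
  · rintro ⟨C, hC⟩ x y
    have hx := classOf_mem_image M x
    have hy := classOf_mem_image M y
    rw [hC, mem_singleton] at hx hy
    exact (classOf_eq_classOf_iff hM).1 (hx.trans hy.symm)
  · intro h
    refine ⟨classOf M a, eq_singleton_iff_unique_mem.2 ⟨classOf_mem_image M a, ?_⟩⟩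
    simp only [mem_image, mem_univ, true_and, forall_exists_index, forall_apply_eq_imp_iff]
    exact fun v => (classOf_eq_classOf_iff hM).2 (h v a)

lemma classOf_joinClasses_of_rel {M : V → V → Prop} (hM : Equivalence M) {a b v : V}
    (hv : M v a ∨ M v b) : classOf (joinClasses M a b) v = classOf M a ∪ classOf M b := by
  ext u
  simp only [mem_union, mem_classOf, joinClasses]
  refine ⟨fun h => ?_, fun h => Or.inr ⟨hv, h.imp hM.symm hM.symm⟩⟩
  rcases h with h | ⟨-, h⟩
  · exact hv.imp (fun hva => hM.trans (hM.symm hva) h) (fun hvb => hM.trans (hM.symm hvb) h)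
  · exact h.imp hM.symm hM.symm

lemma classOf_joinClasses_of_not_rel {M : V → V → Prop} {a b v : V} (hv : ¬ (M v a ∨ M v b)) :
    classOf (joinClasses M a b) v = classOf M v := by
  ext u
  simp only [mem_classOf, joinClasses]
  exact ⟨fun h => h.resolve_right fun h' => hv h'.1, Or.inl⟩

lemma numClasses_joinClasses {M : V → V → Prop} (hM : Equivalence M) {a b : V}
    (hab : ¬ M a b) : numClasses (joinClasses M a b) + 1 = numClasses M := by
  set A := classOf M a
  set B := classOf M b
  set X := univ.image (classOf M)
  have hclass : ∀ v, (classOf M v = A ↔ M v a) ∧ (classOf M v = B ↔ M v b) :=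
    fun v => ⟨classOf_eq_classOf_iff hM, classOf_eq_classOf_iff hM⟩
  have himage :
      univ.image (classOf (joinClasses M a b)) = insert (A ∪ B) ((X.erase A).erase B) := by
    ext C
    simp only [mem_insert, mem_erase, X, mem_image, mem_univ, true_and]
    constructor
    · rintro ⟨v, rfl⟩
      by_cases hv : M v a ∨ M v b
      · exact Or.inl (classOf_joinClasses_of_rel hM hv)
      · rw [classOf_joinClasses_of_not_rel hv]
        exact Or.inr ⟨fun h => hv (Or.inr ((hclass v).2.1 h)),
          fun h => hv (Or.inl ((hclass v).1.1 h)), v, rfl⟩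
    · rintro (rfl | ⟨hB, hA, v, rfl⟩)
      · exact ⟨a, classOf_joinClasses_of_rel hM (Or.inl (hM.refl a))⟩
      · exact ⟨v, classOf_joinClasses_of_not_rel fun h =>
          h.elim (fun h => hA ((hclass v).1.2 h)) (fun h => hB ((hclass v).2.2 h))⟩
  have hunion : A ∪ B ∉ (X.erase A).erase B := by
    simp only [mem_erase, X, mem_image, mem_univ, true_and, not_and]
    rintro - hA ⟨v, hv⟩
    have hva : M v a := mem_classOf.1 (hv ▸ mem_union_left _ (mem_classOf.2 (hM.refl a)))
    exact hA ((hclass v).1.2 hva ▸ hv).symm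
  have hAB : A ≠ B := fun h => hab ((classOf_eq_classOf_iff hM).1 h)
  have hA : A ∈ X := classOf_mem_image M a
  have hB : B ∈ X.erase A := mem_erase.2 ⟨hAB.symm, classOf_mem_image M b⟩
  rw [numClasses, himage, card_insert_of_notMem hunion, card_erase_add_one hB, numClasses,
    ← card_erase_add_one hA]

/-- `m` is the number of contractions still to come. -/
structure IsContractionState (s : (V → V → Prop) × (V → V → Prop)) (m : ℕ) : Prop where
  merge_equivalence : Equivalence s.1
  block_equivalence : Equivalence s.2
  merge_le_block : ∀ x y, s.1 x y → s.2 x y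
  numClasses_eq : numClasses s.1 = m + 1
  nontrivial : 0 < m → ∃ v w, ¬ s.2 v w

lemma isContractionState_init {B0 : V → V → Prop} (hB0 : Equivalence B0)
    (hnt : ∃ v w, ¬ B0 v w) : IsContractionState (Eq, B0) (Fintype.card V - 1) where
  merge_equivalence := eq_equivalence
  block_equivalence := hB0
  merge_le_block x _ h := h ▸ hB0.refl x
  numClasses_eq := by
    obtain ⟨v, -⟩ := hnt
    have := Fintype.card_pos_iff.2 ⟨v⟩
    rw [numClasses_eq_card]
    omega
  nontrivial _ := hnt

lemma IsContractionState.stepPair {s : (V → V → Prop) × (V → V → Prop)} {m : ℕ}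
    (h : IsContractionState s (m + 1)) {e : E} (he : G.TransBlock s.2 e) :
    IsContractionState (G.stepPair s e) m := by
  obtain ⟨M, B⟩ := s
  obtain ⟨a, b, hab⟩ := G.exists_ends_eq e
  have hM := h.merge_equivalence
  have hB := h.block_equivalence
  have hBab : ¬ B a b := he a b hab
  simp only [Multigraph.stepPair, mergeStep_eq_joinClasses G hM hab,
    blockStep_eq_isolate G hM B hab]
  have hJ := equivalence_joinClasses hM a b
  have hnum : numClasses (joinClasses M a b) = m + 1 := by
    have := numClasses_joinClasses hM fun h' => hBab (h.merge_le_block a b h')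
    have h2 := h.numClasses_eq
    simp only at h2 this
    omega
  refine ⟨hJ, equivalence_isolate hB _, fun x y => joinClasses_le_isolate hM h.merge_le_block,
    hnum, fun hm => ?_⟩
  have hnotAll : ¬ ∀ x y, joinClasses M a b x y := by
    have : Nonempty V := ⟨a⟩
    rw [← numClasses_eq_one_iff hJ, hnum]
    omega
  obtain ⟨w, hw⟩ : ∃ w, ¬ joinClasses M a b a w := by
    by_contra! hall
    exact hnotAll fun x y => hJ.trans (hJ.symm (hall x)) (hall y)
  refine ⟨a, w, ?_⟩
  rintro (⟨-, hw'⟩ | ⟨-, ha, -⟩)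
  · exact hw (Or.inr ⟨Or.inl (hM.refl a), hw'⟩)
  · exact ha (Or.inl (hM.refl a))

lemma IsContractionState.stateFrom {s : (V → V → Prop) × (V → V → Prop)} {m : ℕ} {L : List E}
    (h : IsContractionState s (L.length + m)) (hL : G.IsTransBlockSeqFrom s L) :
    IsContractionState (G.stateFrom s L) m := by
  induction L generalizing s with
  | nil => rwa [List.length_nil, Nat.zero_add] at h
  | cons e L ih =>
    obtain ⟨he, hL⟩ := (G.isTransBlockSeqFrom_cons s e L).1 hL
    rw [List.length_cons, Nat.add_right_comm] at h
    exact ih (h.stepPair G he) hL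

/-- A merged pair lies in one block (`merge_le_block`), so `e` is never trans-block again. -/
lemma notMem_of_merged {s : (V → V → Prop) × (V → V → Prop)} {L : List E}
    (h : IsContractionState s L.length) (hL : G.IsTransBlockSeqFrom s L) {e : E} {a b : V}
    (he : G.ends e = s(a, b)) (hab : s.1 a b) : e ∉ L := by
  induction L generalizing s with
  | nil => exact List.not_mem_nil
  | cons e' L ih =>
    obtain ⟨he', hL⟩ := (G.isTransBlockSeqFrom_cons s e' L).1 hL
    rintro (_ | ⟨_, hmem⟩)
    · exact he' a b he (h.merge_le_block a b hab)
    · exact ih (h.stepPair G he') hL (Relation.EqvGen.rel _ _ (Or.inl hab)) hmem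

lemma nodup_of_isTransBlockSeqFrom {s : (V → V → Prop) × (V → V → Prop)} {L : List E}
    (h : IsContractionState s L.length) (hL : G.IsTransBlockSeqFrom s L) : L.Nodup := by
  induction L generalizing s with
  | nil => exact List.nodup_nil
  | cons e L ih =>
    obtain ⟨he, hL⟩ := (G.isTransBlockSeqFrom_cons s e L).1 hL
    obtain ⟨a, b, hab⟩ := G.exists_ends_eq e
    have h' := h.stepPair G he
    exact List.nodup_cons.2
      ⟨G.notMem_of_merged h' hL hab (Relation.EqvGen.rel _ _ (Or.inr hab)), ih h' hL⟩

lemma isSpanningTree_toFinset [Fintype E] {B0 : V → V → Prop} {L : List E}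
    (h : IsContractionState (Eq, B0) L.length) (hL : G.IsTransBlockSeq B0 L) :
    G.IsSpanningTree L.toFinset := by
  refine ⟨fun v w => ?_, ?_⟩
  · have hfin : IsContractionState (G.stateFrom (Eq, B0) L) 0 := h.stateFrom G hL
    have : Nonempty V := ⟨v⟩
    have hall := (numClasses_eq_one_iff hfin.merge_equivalence).1 hfin.numClasses_eq
    exact G.connects_of_stateFrom (fun x y hxy => hxy ▸ Relation.ReflTransGen.refl)
      (fun e he => List.mem_toFinset.2 he) v w (hall v w)
  · have := h.numClasses_eq
    rw [List.toFinset_card_of_nodup (G.nodup_of_isTransBlockSeqFrom h hL)]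
    simp only [numClasses_eq_card] at this
    omega

variable [Fintype E]

lemma wOrd_eq_weightFrom {B0 : V → V → Prop} {L : List E} (hL : L.length = Fintype.card V - 1) :
    G.wOrd B0 L = G.weightFrom (Eq, B0) L := by
  rw [wOrd, weightFrom, ← hL]
  rfl

theorem sum_weightFrom_eq_one (hG : G.IsConnected) {s : (V → V → Prop) × (V → V → Prop)}
    {m : ℕ} (h : IsContractionState s m) :
    ∑ f : Fin m → E, G.weightFrom s (List.ofFn f) = 1 := by
  induction m generalizing s with
  | zero => simp [weightFrom_nil]
  | succ m ih =>
    obtain ⟨e₀, he₀⟩ :=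
      G.exists_transBlock hG h.block_equivalence (h.nontrivial m.succ_pos)
    have hpos : (G.numTransBlock s.2 : ℚ) ≠ 0 :=
      Nat.cast_ne_zero.2 (card_pos.2 ⟨e₀, mem_filter.2 ⟨mem_univ e₀, he₀⟩⟩).ne'
    calc ∑ f : Fin (m + 1) → E, G.weightFrom s (List.ofFn f)
        = ∑ e : E, ∑ g : Fin m → E, G.weightFrom s (e :: List.ofFn g) := by
          rw [← (Fin.consEquiv fun _ => E).sum_comp, Fintype.sum_prod_type]
          simp [List.ofFn_succ]
      _ = ∑ e : E, if G.TransBlock s.2 e then (G.numTransBlock s.2 : ℚ)⁻¹ else 0 := by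
          refine sum_congr rfl fun e _ => ?_
          simp only [weightFrom_cons]
          split_ifs with he
          · rw [← mul_sum, ih (h.stepPair G he), mul_one]
          · exact sum_const_zero
      _ = 1 := by
          rw [sum_ite, sum_const_zero, add_zero, sum_const, nsmul_eq_mul]
          exact mul_inv_cancel₀ hpos

lemma wPi_eq_sum_ofFn {B0 : V → V → Prop} {T : Finset E} {n : ℕ} (hT : T.card = n) :
    G.wPi B0 T = ∑ f : Fin n → E,
      if (List.ofFn f).Nodup ∧ (List.ofFn f).toFinset ⊆ T then G.wOrd B0 (List.ofFn f) else 0 := by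
  subst hT
  exact sum_equiv_fin_eq_sum_ofFn T (G.wOrd B0)

lemma sum_isSpanningTree_ite {B0 : V → V → Prop} {L : List E}
    (h : IsContractionState (Eq, B0) L.length) :
    ∑ T ∈ univ.filter G.IsSpanningTree,
      (if L.Nodup ∧ L.toFinset ⊆ T then G.wOrd B0 L else 0) = G.wOrd B0 L := by
  by_cases hL : G.IsTransBlockSeq B0 L
  · have hnodup := G.nodup_of_isTransBlockSeqFrom h hL
    have hspan := G.isSpanningTree_toFinset h hL
    have hunique : ∀ T ∈ univ.filter G.IsSpanningTree,
        (L.Nodup ∧ L.toFinset ⊆ T ↔ L.toFinset = T) := fun T hT =>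
      ⟨fun hsub => eq_of_subset_of_card_le hsub.2 (by rw [(mem_filter.1 hT).2.2, hspan.2]),
        fun hT => ⟨hnodup, hT.le⟩⟩
    rw [sum_congr rfl fun T hT => if_congr (hunique T hT) rfl rfl, sum_ite_eq,
      if_pos (mem_filter.2 ⟨mem_univ _, hspan⟩)]
  · simp [wOrd, hL]

end Multigraph

theorem sum_partition_weights_eq_one_general
    {V E : Type} [Fintype V] [Fintype E]
    (G : Multigraph V E) (hG : G.IsConnected)
    (B0 : V → V → Prop) (hB0 : Equivalence B0)
    (hnt : ∃ v w : V, ¬ B0 v w) :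
    ∑ T ∈ Finset.univ.filter (fun T : Finset E => G.IsSpanningTree T),
        G.wPi B0 T = 1 := by
  open Multigraph Finset in
  have h₀ := isContractionState_init hB0 hnt
  calc ∑ T ∈ univ.filter G.IsSpanningTree, G.wPi B0 T
      = ∑ T ∈ univ.filter G.IsSpanningTree, ∑ f : Fin (Fintype.card V - 1) → E,
          if (List.ofFn f).Nodup ∧ (List.ofFn f).toFinset ⊆ T then G.wOrd B0 (List.ofFn f)
          else 0 :=
        sum_congr rfl fun T hT => G.wPi_eq_sum_ofFn (mem_filter.1 hT).2.2
    _ = ∑ f : Fin (Fintype.card V - 1) → E, G.wOrd B0 (List.ofFn f) := by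
        rw [sum_comm]
        exact sum_congr rfl fun f _ => G.sum_isSpanningTree_ite (by rwa [List.length_ofFn])
    _ = 1 := by
        rw [← G.sum_weightFrom_eq_one hG h₀]
        exact sum_congr rfl fun f _ => G.wOrd_eq_weightFrom (List.length_ofFn)

/-- for a finite connected multigraph `G` and a non-trivial
partition `B0` of its vertex set, the partition weights
`w^Π(G,T) = ∑_{τ admissible} ∏_p 1/k_p(T_τ)` sum to `1` over all spanning
trees `T` of `G`. -/
theorem sum_partition_weights_eq_one
    {V E : Type} [Fintype V] [Fintype E] [Nonempty V]
    (G : Multigraph V E) (hG : G.IsConnected)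
    (B0 : V → V → Prop) (hB0 : Equivalence B0)
    (hnt : ∃ v w : V, ¬ B0 v w) :
    ∑ T ∈ Finset.univ.filter (fun T : Finset E => G.IsSpanningTree T),
        G.wPi B0 T = 1 :=
  sum_partition_weights_eq_one_general G hG B0 hB0 hnt
end

section
/- For any non-trivial partition Π of the vertex set of a finite connected multigraph G, every spanning tree T of G admits at least one admissible ordering, i.e., an ordering τ of its edges making T_τ a trans-block ordered tree for Π; consequently w^Π(G,T) > 0 for every spanning tree T. -/
open scoped Classical
open MeasureTheory

/-! Contract the edges of `T` greedily, always choosing one that is trans-block for the current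
partition. While fewer than `|V| - 1` edges are contracted such an edge exists: otherwise every
edge of the spanning tree `T` joins two vertices of one block, so the current partition is a single
block. Each current block is either the merged vertex of a contracted edge or lies inside a block
of `Π`, so the current partition is covered by two equivalence relations; as the contracted graph
still has two vertices, `Π` would have to be a single block. Every `k_p` of the resulting ordering
counts its `p`-th edge, so its weight `∏ 1 / k_p` is positive. -/

theorem Equivalence.forall_or_forall_of_forall_or {α : Type*} {r s : α → α → Prop}
    (hr : Equivalence r) (hs : Equivalence s) (h : ∀ x y, r x y ∨ s x y) :
    (∀ x y, r x y) ∨ ∀ x y, s x y := by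
  refine or_iff_not_imp_left.mpr fun hr_total => ?_
  obtain ⟨v, z, hvz⟩ : ∃ v z, ¬ r v z := by simpa using hr_total
  have hs_vz : s v z := (h v z).resolve_left hvz
  have hs_v : ∀ x, s x v := by
    intro x
    by_cases hxv : r x v
    · have hxz : s x z := (h x z).resolve_left fun hxz => hvz (hr.trans (hr.symm hxv) hxz)
      exact hs.trans hxz (hs.symm hs_vz)
    · exact (h x v).resolve_left hxv
  exact fun x y => hs.trans (hs_v x) (hs.symm (hs_v y))

namespace Multigraph

variable {V E : Type} (G : Multigraph V E)

variable {G} in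
theorem Connects.rel {S : Finset E} {r : V → V → Prop} (hr : Equivalence r)
    (hS : ∀ e ∈ S, ∀ a b, G.ends e = s(a, b) → r a b) {v w : V} (h : G.Connects S v w) :
    r v w := by
  induction h with
  | refl => exact hr.refl v
  | tail _ hstep ih =>
    obtain ⟨e, he, hab⟩ := hstep
    exact hr.trans ih (hS e he _ _ hab)

theorem rel_of_not_transBlock {B : V → V → Prop} (hB : ∀ {x y}, B x y → B y x) {e : E}
    (he : ¬ G.TransBlock B e) {a b : V} (hab : G.ends e = s(a, b)) : B a b := by
  simp only [TransBlock, not_forall, not_not] at he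
  obtain ⟨a', b', hab', hB'⟩ := he
  rcases Sym2.eq_iff.mp (hab.symm.trans hab') with ⟨rfl, rfl⟩ | ⟨rfl, rfl⟩
  exacts [hB', hB hB']

section mergeStep

variable {M : V → V → Prop} {e : E}

theorem mergeStep_equivalence (M : V → V → Prop) (e : E) : Equivalence (G.mergeStep M e) :=
  Relation.EqvGen.is_equivalence _

theorem mergeStep_of_rel {x y : V} (h : M x y) : G.mergeStep M e x y :=
  Relation.EqvGen.rel _ _ (Or.inl h)

theorem mergeStep_of_ends {a b : V} (h : G.ends e = s(a, b)) : G.mergeStep M e a b :=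
  Relation.EqvGen.rel _ _ (Or.inr h)

theorem rel_or_of_mergeStep (hM : Equivalence M) {a b : V} (hab : G.ends e = s(a, b))
    {x y : V} (hxy : G.mergeStep M e x y) :
    M x y ∨ (M x a ∧ M y b) ∨ (M x b ∧ M y a) := by
  set R : V → V → Prop := fun x y => M x y ∨ (M x a ∧ M y b) ∨ (M x b ∧ M y a)
  have hR : Equivalence R := by
    have hsymm : ∀ x y, M x y → M y x := fun _ _ => hM.symm
    have htrans : ∀ x y z, M x y → M y z → M x z := fun _ _ _ => hM.trans
    refine ⟨fun x => Or.inl (hM.refl x), fun h => ?_, fun h h' => ?_⟩ <;> grind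
  refine hR.eqvGen_iff.mp (Relation.EqvGen.mono (fun u v huv => ?_) _ _ hxy)
  rcases huv with huv | huv
  · exact Or.inl huv
  · rcases Sym2.eq_iff.mp (hab.symm.trans huv) with ⟨rfl, rfl⟩ | ⟨rfl, rfl⟩
    exacts [Or.inr (Or.inl ⟨hM.refl _, hM.refl _⟩), Or.inr (Or.inr ⟨hM.refl _, hM.refl _⟩)]

theorem exists_pairwise_not_mergeStep (hM : Equivalence M) {a b : V} (hab : G.ends e = s(a, b))
    {S : Finset V} (hS : (S : Set V).Pairwise fun x y => ¬ M x y) :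
    ∃ S' : Finset V, S.card ≤ S'.card + 1 ∧
      (S' : Set V).Pairwise fun x y => ¬ G.mergeStep M e x y := by
  refine ⟨S.filter fun x => ¬ M x a, ?_, fun x hx y hy hxy hmerge => ?_⟩
  · have hle : (S.filter fun x => M x a).card ≤ 1 := by
      refine Finset.card_le_one.mpr fun x hx y hy => by_contra fun hxy => ?_
      simp only [Finset.mem_filter] at hx hy
      exact hS hx.1 hy.1 hxy (hM.trans hx.2 (hM.symm hy.2))
    have hsplit := Finset.card_filter_add_card_filter_not (s := S) fun x => M x a
    omega
  · simp only [Finset.coe_filter, Set.mem_ofPred_eq] at hx hy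
    rcases G.rel_or_of_mergeStep hM hab hmerge with h | ⟨h, -⟩ | ⟨-, h⟩
    exacts [hS hx.1 hy.1 hxy h, hx.2 h, hy.2 h]

end mergeStep

theorem blockStep_equivalence {M B : V → V → Prop} (hB : Equivalence B) (e : E) :
    Equivalence (G.blockStep M B e) := by
  refine ⟨fun x a b _ => ?_, fun h a b hab => ?_, fun h h' a b hab => ?_⟩
  · by_cases hx : G.mergeStep M e x a
    exacts [Or.inl ⟨hx, hx⟩, Or.inr ⟨hB.refl x, hx, hx⟩]
  · rcases h a b hab with ⟨h1, h2⟩ | ⟨h1, h2, h3⟩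
    exacts [Or.inl ⟨h2, h1⟩, Or.inr ⟨hB.symm h1, h3, h2⟩]
  · rcases h a b hab with ⟨h1, h2⟩ | ⟨h1, h2, h3⟩ <;>
      rcases h' a b hab with ⟨h4, h5⟩ | ⟨h4, h5, h6⟩
    exacts [Or.inl ⟨h1, h5⟩, absurd h2 h5, absurd h4 h3, Or.inr ⟨hB.trans h1 h4, h2, h6⟩]

theorem state_append_singleton (B0 : V → V → Prop) (L : List E) (e : E) :
    G.state B0 (L ++ [e]) = G.stepPair (G.state B0 L) e := by
  simp [state, List.foldl_append]

/-- Invariants of the state `(M, B)` reached from `B0` by contracting `L`; the last field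
says that `M` still has at least `|V| - |L|` classes. -/
structure IsContractionState_s12 [Fintype V] (B0 M B : V → V → Prop) (L : List E) : Prop where
  merge_equivalence : Equivalence M
  block_equivalence : Equivalence B
  block_of_merge {x y : V} : M x y → B x y
  merge_or_of_block {x y : V} : B x y → M x y ∨ B0 x y
  merge_ends : ∀ e ∈ L, ∀ a b, G.ends e = s(a, b) → M a b
  exists_pairwise_not_merge : ∃ S : Finset V, Fintype.card V ≤ S.card + L.length ∧
    (S : Set V).Pairwise fun x y => ¬ M x y

namespace IsContractionState_s12

variable {G} [Fintype V] {B0 M B : V → V → Prop} {L : List E}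

theorem stepPair_s12 (h : G.IsContractionState_s12 B0 M B L) (e : E) :
    G.IsContractionState_s12 B0 (G.mergeStep M e) (G.blockStep M B e) (L ++ [e]) := by
  obtain ⟨⟨a, b⟩, hab⟩ := Sym2.mk_surjective (G.ends e)
  replace hab : G.ends e = s(a, b) := hab.symm
  have hM := h.merge_equivalence
  have hM' := G.mergeStep_equivalence M e
  refine ⟨hM', G.blockStep_equivalence h.block_equivalence e, fun {x y} hxy a' b' hab' => ?_,
    fun {x y} hxy => ?_, fun e' he' a' b' hab' => ?_, ?_⟩
  · by_cases hxa : G.mergeStep M e x a'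
    · exact Or.inl ⟨hxa, hM'.trans (hM'.symm hxy) hxa⟩
    · have hM_xy : M x y := by
        rcases G.rel_or_of_mergeStep hM hab' hxy with h1 | ⟨h1, -⟩ | ⟨h1, -⟩
        · exact h1
        · exact absurd (G.mergeStep_of_rel h1) hxa
        · exact absurd
            (hM'.trans (G.mergeStep_of_rel h1) (hM'.symm (G.mergeStep_of_ends hab'))) hxa
      exact Or.inr ⟨h.block_of_merge hM_xy, hxa, fun hya => hxa (hM'.trans hxy hya)⟩
  · rcases hxy a b hab with ⟨hxa, hya⟩ | ⟨hB_xy, -, -⟩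
    · exact Or.inl (hM'.trans hxa (hM'.symm hya))
    · exact (h.merge_or_of_block hB_xy).imp_left G.mergeStep_of_rel
  · rcases List.mem_append.mp he' with he' | he'
    · exact G.mergeStep_of_rel (h.merge_ends e' he' a' b' hab')
    · obtain rfl := List.mem_singleton.mp he'
      exact G.mergeStep_of_ends hab'
  · obtain ⟨S, hcard, hS⟩ := h.exists_pairwise_not_merge
    obtain ⟨S', hcard', hS'⟩ := G.exists_pairwise_not_mergeStep hM hab hS
    exact ⟨S', by simp only [List.length_append, List.length_singleton]; omega, hS'⟩

theorem not_mem_of_transBlock (h : G.IsContractionState_s12 B0 M B L) {e : E}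
    (he : G.TransBlock B e) : e ∉ L := by
  intro heL
  obtain ⟨⟨a, b⟩, hab⟩ := Sym2.mk_surjective (G.ends e)
  exact he a b hab.symm (h.block_of_merge (h.merge_ends e heL a b hab.symm))

theorem exists_transBlock (h : G.IsContractionState_s12 B0 M B L) (hB0 : Equivalence B0)
    (hnt : ∃ v w : V, ¬ B0 v w) {T : Finset E} (hT : ∀ v w : V, G.Connects T v w)
    (hlen : L.length + 2 ≤ Fintype.card V) : ∃ e ∈ T, G.TransBlock B e := by
  by_contra! hnone
  have hB_total : ∀ x y, B x y := fun x y =>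
    (hT x y).rel h.block_equivalence fun e he _ _ hab =>
      G.rel_of_not_transBlock h.block_equivalence.symm (hnone e he) hab
  have hM_not_total : ∃ x y, ¬ M x y := by
    obtain ⟨S, hcard, hS⟩ := h.exists_pairwise_not_merge
    obtain ⟨x, hx, y, hy, hxy⟩ := Finset.one_lt_card.mp (by omega : 1 < S.card)
    exact ⟨x, y, hS hx hy hxy⟩
  rcases h.merge_equivalence.forall_or_forall_of_forall_or hB0
    (fun x y => h.merge_or_of_block (hB_total x y)) with hM | hB0_total
  · obtain ⟨x, y, hxy⟩ := hM_not_total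
    exact hxy (hM x y)
  · obtain ⟨v, w, hvw⟩ := hnt
    exact hvw (hB0_total v w)

end IsContractionState_s12

theorem isContractionState_state [Fintype V] {B0 : V → V → Prop} (hB0 : Equivalence B0)
    (L : List E) : G.IsContractionState_s12 B0 (G.state B0 L).1 (G.state B0 L).2 L := by
  induction L using List.reverseRecOn with
  | nil =>
    exact ⟨eq_equivalence, hB0, fun h => h ▸ hB0.refl _, Or.inr, by simp, Finset.univ, by simp,
      fun _ _ _ _ hxy => hxy⟩
  | append_singleton L e ih =>
    rw [state_append_singleton]
    exact ih.stepPair_s12 e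

theorem isTransBlockSeq_append_singleton {B0 : V → V → Prop} {L : List E}
    (hL : G.IsTransBlockSeq B0 L) {e : E} (he : G.TransBlock (G.state B0 L).2 e) :
    G.IsTransBlockSeq B0 (L ++ [e]) := by
  intro p hp
  rw [List.length_append, List.length_singleton] at hp
  rcases (Nat.lt_succ_iff.mp hp).lt_or_eq with hp | rfl
  · rw [List.take_append_of_le_length hp.le]
    simpa [List.getElem_append_left hp] using hL p hp
  · simpa using he

theorem exists_isTransBlockSeq_length [Fintype V] {B0 : V → V → Prop} (hB0 : Equivalence B0)
    (hnt : ∃ v w : V, ¬ B0 v w) {T : Finset E} [Fintype E] (hT : G.IsSpanningTree T) :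
    ∀ k ≤ T.card, ∃ L : List E, L.Nodup ∧ L.toFinset ⊆ T ∧ L.length = k ∧
      G.IsTransBlockSeq B0 L := by
  intro k
  induction k with
  | zero => exact fun _ => ⟨[], List.nodup_nil, by simp, rfl, fun p hp => absurd hp (by simp)⟩
  | succ k ih =>
    intro hk
    obtain ⟨L, hnd, hsub, hlen, hseq⟩ := ih (by omega)
    have hstate := G.isContractionState_state hB0 L
    obtain ⟨e, heT, he⟩ := hstate.exists_transBlock hB0 hnt hT.1 (by have := hT.2; omega)
    refine ⟨L ++ [e], ?_, ?_, by simp [hlen], G.isTransBlockSeq_append_singleton hseq he⟩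
    · rw [← List.concat_eq_append]
      exact hnd.concat (hstate.not_mem_of_transBlock he)
    · simpa [Finset.insert_subset_iff, heT] using hsub

theorem wOrd_nonneg [Fintype V] [Fintype E] (B0 : V → V → Prop) (L : List E) :
    0 ≤ G.wOrd B0 L := by
  unfold wOrd
  split_ifs
  exacts [Finset.prod_nonneg fun _ _ => by positivity, le_rfl]

theorem wOrd_pos [Fintype V] [Fintype E] {B0 : V → V → Prop} {L : List E}
    (hL : G.IsTransBlockSeq B0 L) (hlen : Fintype.card V - 1 ≤ L.length) :
    0 < G.wOrd B0 L := by
  rw [wOrd, if_pos hL]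
  refine Finset.prod_pos fun p hp => inv_pos.mpr (Nat.cast_pos.mpr ?_)
  have hpL : p < L.length := by rw [Finset.mem_range] at hp; omega
  exact Finset.card_pos.mpr ⟨L[p], by simpa using hL p hpL⟩

theorem exists_equiv_ofFn_eq {L : List E} (hnd : L.Nodup) {T : Finset E} (hT : L.toFinset = T) :
    ∃ τ : Fin T.card ≃ {e // e ∈ T}, (List.ofFn fun i => (τ i : E)) = L := by
  have hlen : T.card = L.length := by rw [← hT, List.toFinset_card_of_nodup hnd]
  refine ⟨(finCongr hlen).trans ((hnd.getEquiv L).trans (Equiv.subtypeEquivRight fun e => ?_)),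
    ?_⟩
  · rw [← hT, List.mem_toFinset]
  · refine List.ext_get (by simp [hlen]) fun i _ _ => ?_
    simp only [List.Nodup.getEquiv, List.get_eq_getElem, Equiv.trans_apply, Equiv.coe_fn_mk,
      finCongr_apply_coe, Equiv.subtypeEquivRight_apply_coe, List.getElem_ofFn]
    rfl

theorem wPi_pos [Fintype V] [Fintype E] {B0 : V → V → Prop} {L : List E} {T : Finset E}
    (hnd : L.Nodup) (hT : L.toFinset = T) (hL : G.IsTransBlockSeq B0 L)
    (hlen : Fintype.card V - 1 ≤ L.length) : 0 < G.wPi B0 T := by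
  obtain ⟨τ, hτ⟩ := exists_equiv_ofFn_eq hnd hT
  refine Finset.sum_pos' (fun _ _ => G.wOrd_nonneg B0 _) ⟨τ, Finset.mem_univ τ, ?_⟩
  rw [hτ]
  exact G.wOrd_pos hL hlen

end Multigraph

theorem exists_admissible_ordering_and_wPi_pos_general
    {V E : Type} [Fintype V] [Fintype E]
    (G : Multigraph V E)
    (B0 : V → V → Prop) (hB0 : Equivalence B0)
    (hnt : ∃ v w : V, ¬ B0 v w)
    (T : Finset E) (hT : G.IsSpanningTree T) :
    (∃ L : List E, L.Nodup ∧ L.toFinset = T ∧ G.IsTransBlockSeq B0 L) ∧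
      0 < G.wPi B0 T := by
  obtain ⟨L, hnd, hsub, hlen, hL⟩ := G.exists_isTransBlockSeq_length hB0 hnt hT T.card le_rfl
  have hT_eq : L.toFinset = T :=
    Finset.eq_of_subset_of_card_le hsub (by rw [List.toFinset_card_of_nodup hnd, hlen])
  exact ⟨⟨L, hnd, hT_eq, hL⟩, G.wPi_pos hnd hT_eq hL (by rw [hlen, hT.2])⟩

/-- for a non-trivial partition `B0`, every spanning tree `T`
admits at least one admissible (trans-block) ordering; consequently
`w^Π(G,T) > 0`. -/
theorem exists_admissible_ordering_and_wPi_pos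
    {V E : Type} [Fintype V] [Fintype E] [Nonempty V]
    (G : Multigraph V E) (hG : G.IsConnected)
    (B0 : V → V → Prop) (hB0 : Equivalence B0)
    (hnt : ∃ v w : V, ¬ B0 v w)
    (T : Finset E) (hT : G.IsSpanningTree T) :
    (∃ L : List E, L.Nodup ∧ L.toFinset = T ∧ G.IsTransBlockSeq B0 L) ∧
      0 < G.wPi B0 T :=
  exists_admissible_ordering_and_wPi_pos_general G B0 hB0 hnt T hT
end
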